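/- arXiv:2111.07636 — 4 statements merged into one kernel-verified Lean document; each statement's English description precedes it below -/
import Mathlib

section
/- If two pure states ψ and φ of N qudits satisfy ψ = Lφ for an invertible local operator L = ⊗_i L_i (i.e. they are SLOCC-equivalent), then dim W_k^ψ = dim W_k^φ for all k, hence their entanglement polynomials are equal. -/
noncomputable section

open Matrix

/-- An operator on `N` qudits (Hilbert space modeled as functions `(ι → Fin d) → ℂ`)
is *supported on* the set of sites `B` if it has the form `O_B ⊗ I_{B̄}`:
its matrix elements vanish unless the configurations agree off `B`, and they do not
depend on the (common) configuration off `B`. -/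
def SupportedOn {ι : Type*} [DecidableEq ι] (d : ℕ) (B : Finset ι)
    (M : Matrix (ι → Fin d) (ι → Fin d) ℂ) : Prop :=
  (∀ x y : ι → Fin d, (∃ i ∉ B, x i ≠ y i) → M x y = 0) ∧
  (∀ x y z z' : ι → Fin d,
    M (fun i => if i ∈ B then x i else z i) (fun i => if i ∈ B then y i else z i) =
    M (fun i => if i ∈ B then x i else z' i) (fun i => if i ∈ B then y i else z' i))

/-- `V^k`: the span of operators supported on at most `k` sites (the `k`-local operators). -/
def Vk (ι : Type*) [DecidableEq ι] (d k : ℕ) :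
    Submodule ℂ (Matrix (ι → Fin d) (ι → Fin d) ℂ) :=
  Submodule.span ℂ {M | ∃ B : Finset ι, B.card ≤ k ∧ SupportedOn d B M}

/-- `W_k^ψ = Span{Oψ : O ∈ V^k}`. -/
def Wk {ι : Type*} [Fintype ι] [DecidableEq ι] {d : ℕ} (ψ : (ι → Fin d) → ℂ) (k : ℕ) :
    Submodule ℂ ((ι → Fin d) → ℂ) :=
  Submodule.span ℂ {v | ∃ M ∈ Vk ι d k, v = M.mulVec ψ}

/-- `dim W_k^ψ`. -/
def dimW {ι : Type*} [Fintype ι] [DecidableEq ι] {d : ℕ} (ψ : (ι → Fin d) → ℂ) (k : ℕ) : ℕ :=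
  Module.finrank ℂ (Wk ψ k)

/-- `dim ΔW_k^ψ = dim W_k^ψ − dim W_{k−1}^ψ` (with `W_{−1} = 0`), as an integer. -/
def deltaDimW {ι : Type*} [Fintype ι] [DecidableEq ι] {d : ℕ} (ψ : (ι → Fin d) → ℂ)
    (k : ℕ) : ℤ :=
  (dimW ψ k : ℤ) - if k = 0 then 0 else (dimW ψ (k - 1) : ℤ)

/-- The entanglement polynomial `f(ψ) = Σ_k (dim ΔW_k^ψ) x^k ∈ ℤ[x]`. -/
def entPoly {ι : Type*} [Fintype ι] [DecidableEq ι] {d : ℕ} (ψ : (ι → Fin d) → ℂ) :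
    Polynomial ℤ :=
  ∑ k ∈ Finset.range (Fintype.card ι + 1), Polynomial.C (deltaDimW ψ k) * Polynomial.X ^ k

/-- Tensor product of states of two disjoint sets of qudits. -/
def tens {ι₁ ι₂ : Type*} {d : ℕ} (ψ : (ι₁ → Fin d) → ℂ) (φ : (ι₂ → Fin d) → ℂ) :
    (ι₁ ⊕ ι₂ → Fin d) → ℂ :=
  fun x => ψ (fun i => x (Sum.inl i)) * φ (fun j => x (Sum.inr j))

end

noncomputable section Aux
open Matrix Finset

variable {ι : Type*} [Fintype ι] [DecidableEq ι] {d : ℕ}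

/-- Tensor product of one-site operators. -/
def ofT (F : ι → Matrix (Fin d) (Fin d) ℂ) : Matrix (ι → Fin d) (ι → Fin d) ℂ :=
  Matrix.of fun x y => ∏ i, F i (x i) (y i)

lemma ofT_apply (F : ι → Matrix (Fin d) (Fin d) ℂ) (x y : ι → Fin d) :
    ofT F x y = ∏ i, F i (x i) (y i) := rfl

lemma ofT_mul (F G : ι → Matrix (Fin d) (Fin d) ℂ) :
    ofT F * ofT G = ofT (fun i => F i * G i) := by
  ext x y
  simp only [Matrix.mul_apply, ofT_apply]
  rw [Finset.prod_univ_sum, Fintype.piFinset_univ]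
  exact Finset.sum_congr rfl fun j _ => (Finset.prod_mul_distrib).symm

lemma ofT_one : ofT (fun _ : ι => (1 : Matrix (Fin d) (Fin d) ℂ)) = 1 := by
  ext x y
  rw [ofT_apply, Matrix.one_apply]
  by_cases h : x = y
  · subst h; simp [Matrix.one_apply]
  · rw [if_neg h]
    obtain ⟨i, hi⟩ := Function.ne_iff.mp h
    exact Finset.prod_eq_zero (Finset.mem_univ i) (by simp [Matrix.one_apply, hi])

/-- Merge of configurations on `B` and off `B`. -/
def mrg (B : Finset ι) (a : {i // i ∈ B} → Fin d) (s : {i // i ∉ B} → Fin d) : ι → Fin d :=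
  fun i => if h : i ∈ B then a ⟨i, h⟩ else s ⟨i, h⟩

lemma mrg_mem {B : Finset ι} (a : {i // i ∈ B} → Fin d) (s : {i // i ∉ B} → Fin d)
    (i : {i // i ∈ B}) : mrg B a s i.1 = a i := dif_pos i.2

lemma mrg_not_mem {B : Finset ι} (a : {i // i ∈ B} → Fin d) (s : {i // i ∉ B} → Fin d)
    (i : {i // i ∉ B}) : mrg B a s i.1 = s i := dif_neg i.2

lemma sum_mrg {B : Finset ι} (f : (ι → Fin d) → ℂ) :
    ∑ v, f v = ∑ a : {i // i ∈ B} → Fin d, ∑ s : {i // i ∉ B} → Fin d, f (mrg B a s) := by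
  rw [← Equiv.sum_comp (Equiv.piEquivPiSubtypeProd (fun i => i ∈ B) (fun _ : ι => Fin d)).symm f,
    Fintype.sum_prod_type]
  rfl

lemma supp_eq {B : Finset ι} {M : Matrix (ι → Fin d) (ι → Fin d) ℂ}
    (hM : SupportedOn d B M) (a b : {i // i ∈ B} → Fin d) (s w0 : {i // i ∉ B} → Fin d) :
    M (mrg B a s) (mrg B b s) = M (mrg B a w0) (mrg B b w0) := by
  have h := hM.2 (mrg B a s) (mrg B b s) (mrg B a s) (mrg B a w0)
  have e1 : (fun i => if i ∈ B then mrg B a s i else mrg B a s i) = mrg B a s := by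
    funext i; exact ite_self _
  have e2 : (fun i => if i ∈ B then mrg B b s i else mrg B a s i) = mrg B b s := by
    funext i; by_cases hi : i ∈ B <;> simp [mrg, hi]
  have e3 : (fun i => if i ∈ B then mrg B a s i else mrg B a w0 i) = mrg B a w0 := by
    funext i; by_cases hi : i ∈ B <;> simp [mrg, hi]
  have e4 : (fun i => if i ∈ B then mrg B b s i else mrg B a w0 i) = mrg B b w0 := by
    funext i; by_cases hi : i ∈ B <;> simp [mrg, hi]
  rwa [e1, e2, e3, e4] at h

lemma supp_ne {B : Finset ι} {M : Matrix (ι → Fin d) (ι → Fin d) ℂ}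
    (hM : SupportedOn d B M) (a b : {i // i ∈ B} → Fin d) {s t : {i // i ∉ B} → Fin d}
    (hst : s ≠ t) : M (mrg B a s) (mrg B b t) = 0 := by
  obtain ⟨i, hi⟩ := Function.ne_iff.mp hst
  exact hM.1 _ _ ⟨i.1, i.2, by rw [mrg_not_mem, mrg_not_mem]; exact hi⟩

end Aux

noncomputable section Aux2
open Matrix Finset
variable {ι : Type*} [Fintype ι] [DecidableEq ι] {d : ℕ}

set_option maxHeartbeats 1000000 in
lemma conj_entry {B : Finset ι} {M : Matrix (ι → Fin d) (ι → Fin d) ℂ}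
    (hM : SupportedOn d B M) (F G : ι → Matrix (Fin d) (Fin d) ℂ)
    (hFG : ∀ i, F i * G i = 1) (x y : ι → Fin d) (w0 : {i // i ∉ B} → Fin d) :
    (ofT F * M * ofT G) x y =
      (∏ i : {i // i ∉ B}, if x i.1 = y i.1 then (1 : ℂ) else 0) *
      ∑ a : {i // i ∈ B} → Fin d, ∑ b : {i // i ∈ B} → Fin d,
        (∏ i : {i // i ∈ B}, F i.1 (x i.1) (a i)) *
        M (mrg B a w0) (mrg B b w0) *
        (∏ i : {i // i ∈ B}, G i.1 (b i) (y i.1)) := by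
  rw [Matrix.mul_apply]
  rw [sum_mrg (B := B) (fun v => (ofT F * M) x v * ofT G v y)]
  have inner : ∀ (b : {i // i ∈ B} → Fin d) (t : {i // i ∉ B} → Fin d),
      (ofT F * M) x (mrg B b t)
        = ∑ a : {i // i ∈ B} → Fin d, ∑ s : {i // i ∉ B} → Fin d,
            ofT F x (mrg B a s) * M (mrg B a s) (mrg B b t) := by
    intro b t
    rw [Matrix.mul_apply, sum_mrg (B := B) (fun u => ofT F x u * M u (mrg B b t))]
  simp only [inner, Finset.sum_mul]
  have step2 : ∀ (b : {i // i ∈ B} → Fin d) (t : {i // i ∉ B} → Fin d)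
      (a : {i // i ∈ B} → Fin d) (s : {i // i ∉ B} → Fin d),
      ofT F x (mrg B a s) * M (mrg B a s) (mrg B b t) * ofT G (mrg B b t) y
        = if s = t then
            ofT F x (mrg B a t) * M (mrg B a w0) (mrg B b w0) * ofT G (mrg B b t) y
          else 0 := by
    intro b t a s
    by_cases hst : s = t
    · subst hst; rw [if_pos rfl, supp_eq hM]
    · rw [if_neg hst, supp_ne hM _ _ hst, mul_zero, zero_mul]
  simp only [step2, Finset.sum_ite_eq' Finset.univ, Finset.mem_univ, if_true]
  have splitF : ∀ (a : {i // i ∈ B} → Fin d) (t : {i // i ∉ B} → Fin d),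
      ofT F x (mrg B a t)
        = (∏ i : {i // i ∈ B}, F i.1 (x i.1) (a i)) *
          ∏ i : {i // i ∉ B}, F i.1 (x i.1) (t i) := by
    intro a t
    rw [ofT_apply,
      ← Fintype.prod_subtype_mul_prod_subtype (fun i => i ∈ B) (fun i => F i (x i) (mrg B a t i))]
    congr 1
    · exact Finset.prod_congr (by congr!) fun i _ => by rw [mrg_mem]
    · exact Finset.prod_congr (by congr!) fun i _ => by rw [mrg_not_mem]
  have splitG : ∀ (b : {i // i ∈ B} → Fin d) (t : {i // i ∉ B} → Fin d),
      ofT G (mrg B b t) y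
        = (∏ i : {i // i ∈ B}, G i.1 (b i) (y i.1)) *
          ∏ i : {i // i ∉ B}, G i.1 (t i) (y i.1) := by
    intro b t
    rw [ofT_apply,
      ← Fintype.prod_subtype_mul_prod_subtype (fun i => i ∈ B) (fun i => G i (mrg B b t i) (y i))]
    congr 1
    · exact Finset.prod_congr (by congr!) fun i _ => by rw [mrg_mem]
    · exact Finset.prod_congr (by congr!) fun i _ => by rw [mrg_not_mem]
  simp only [splitF, splitG]
  have hdelta : (∏ i : {i // i ∉ B}, if x i.1 = y i.1 then (1 : ℂ) else 0)
      = ∑ t : {i // i ∉ B} → Fin d,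
          (∏ i : {i // i ∉ B}, F i.1 (x i.1) (t i)) *
          ∏ i : {i // i ∉ B}, G i.1 (t i) (y i.1) := by
    have : ∀ i : {i // i ∉ B}, (if x i.1 = y i.1 then (1 : ℂ) else 0)
        = ∑ j : Fin d, F i.1 (x i.1) j * G i.1 j (y i.1) := by
      intro i
      rw [← Matrix.mul_apply, hFG i.1, Matrix.one_apply]
    rw [Finset.prod_congr rfl fun i _ => this i, Finset.prod_univ_sum, Fintype.piFinset_univ]
    exact Finset.sum_congr rfl fun t _ => Finset.prod_mul_distrib
  rw [hdelta, Finset.sum_mul, Finset.sum_comm]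
  refine Finset.sum_congr rfl fun t _ => ?_
  rw [Finset.sum_comm]
  simp only [Finset.mul_sum]
  refine Finset.sum_congr rfl fun a _ => Finset.sum_congr rfl fun b _ => ?_
  ring

end Aux2

noncomputable section Aux3
open Matrix Finset
variable {ι : Type*} [Fintype ι] [DecidableEq ι] {d : ℕ}

lemma supportedOn_conj {B : Finset ι} {M : Matrix (ι → Fin d) (ι → Fin d) ℂ}
    (hM : SupportedOn d B M) (F G : ι → Matrix (Fin d) (Fin d) ℂ)
    (hFG : ∀ i, F i * G i = 1) :
    SupportedOn d B (ofT F * M * ofT G) := by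
  constructor
  · rintro x y ⟨i0, hi0, hxy⟩
    rw [conj_entry hM F G hFG x y (fun i => x i.1)]
    rw [Finset.prod_eq_zero (Finset.mem_univ (⟨i0, hi0⟩ : {i // i ∉ B})) (by simp [hxy])]
    exact zero_mul _
  · intro x y z z'
    rw [conj_entry hM F G hFG _ _ (fun i => z i.1),
      conj_entry hM F G hFG _ _ (fun i => z i.1)]
    congr 1
    · refine Finset.prod_congr rfl fun i _ => ?_
      simp [i.2]
    · refine Finset.sum_congr rfl fun a _ => Finset.sum_congr rfl fun b _ => ?_
      congr 1
      · congr 1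
        exact Finset.prod_congr rfl fun i _ => by simp [i.2]
      · exact Finset.prod_congr rfl fun i _ => by simp [i.2]

lemma Vk_conj (F G : ι → Matrix (Fin d) (Fin d) ℂ) (hFG : ∀ i, F i * G i = 1) (k : ℕ)
    {M : Matrix (ι → Fin d) (ι → Fin d) ℂ} (hMk : M ∈ Vk ι d k) :
    ofT F * M * ofT G ∈ Vk ι d k := by
  have hle : Vk ι d k ≤ Submodule.comap
      ((LinearMap.mulLeft ℂ (ofT F)).comp (LinearMap.mulRight ℂ (ofT G))) (Vk ι d k) := by
    rw [Vk, Submodule.span_le]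
    rintro M ⟨B, hB, hsupp⟩
    simp only [Set.mem_preimage, SetLike.mem_coe, Submodule.mem_comap, LinearMap.coe_comp,
      Function.comp_apply, LinearMap.mulRight_apply, LinearMap.mulLeft_apply]
    exact Submodule.subset_span ⟨B, hB, by rw [← mul_assoc]; exact supportedOn_conj hsupp F G hFG⟩
  have := hle hMk
  simpa [mul_assoc] using this

end Aux3

noncomputable section Aux4
open Matrix Finset
variable {ι : Type*} [Fintype ι] [DecidableEq ι] {d : ℕ}

lemma Wk_map (F G : ι → Matrix (Fin d) (Fin d) ℂ)
    (hFG : ∀ i, F i * G i = 1) (hGF : ∀ i, G i * F i = 1)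
    (φ : (ι → Fin d) → ℂ) (k : ℕ) :
    Wk ((ofT F).mulVec φ) k = (Wk φ k).map (Matrix.mulVecLin (ofT F)) := by
  have hFG' : ofT F * ofT G = 1 := by
    rw [ofT_mul]
    rw [show (fun i => F i * G i) = fun _ : ι => (1 : Matrix (Fin d) (Fin d) ℂ) from funext hFG]
    exact ofT_one
  have hGF' : ofT G * ofT F = 1 := by
    rw [ofT_mul]
    rw [show (fun i => G i * F i) = fun _ : ι => (1 : Matrix (Fin d) (Fin d) ℂ) from funext hGF]
    exact ofT_one
  apply le_antisymm
  · rw [Wk, Submodule.span_le]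
    rintro v ⟨M, hMk, rfl⟩
    have hw : (ofT G * M * ofT F).mulVec φ ∈ Wk φ k :=
      Submodule.subset_span ⟨_, Vk_conj G F hGF k hMk, rfl⟩
    have heq : M.mulVec ((ofT F).mulVec φ)
        = Matrix.mulVecLin (ofT F) ((ofT G * M * ofT F).mulVec φ) := by
      rw [Matrix.mulVecLin_apply, Matrix.mulVec_mulVec, Matrix.mulVec_mulVec,
        show ofT F * (ofT G * M * ofT F) = M * ofT F by
          rw [← mul_assoc, ← mul_assoc, hFG', one_mul]]
    rw [heq]
    exact Submodule.mem_map_of_mem hw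
  · rw [Submodule.map_le_iff_le_comap, Wk, Submodule.span_le]
    rintro v ⟨M, hMk, rfl⟩
    simp only [SetLike.mem_coe, Submodule.mem_comap]
    have heq : Matrix.mulVecLin (ofT F) (M.mulVec φ)
        = (ofT F * M * ofT G).mulVec ((ofT F).mulVec φ) := by
      rw [Matrix.mulVecLin_apply, Matrix.mulVec_mulVec, Matrix.mulVec_mulVec,
        show ofT F * M * ofT G * ofT F = ofT F * M by
          rw [mul_assoc, hGF', mul_one]]
    rw [heq]
    exact Submodule.subset_span ⟨_, Vk_conj F G hFG k hMk, rfl⟩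

lemma dimWaux_eq (F G : ι → Matrix (Fin d) (Fin d) ℂ)
    (hFG : ∀ i, F i * G i = 1) (hGF : ∀ i, G i * F i = 1)
    (φ : (ι → Fin d) → ℂ) (k : ℕ) :
    Module.finrank ℂ (Wk ((ofT F).mulVec φ) k) = Module.finrank ℂ (Wk φ k) := by
  have hFG' : ofT F * ofT G = 1 := by
    rw [ofT_mul,
      show (fun i => F i * G i) = fun _ : ι => (1 : Matrix (Fin d) (Fin d) ℂ) from funext hFG]
    exact ofT_one
  have hGF' : ofT G * ofT F = 1 := by
    rw [ofT_mul,
      show (fun i => G i * F i) = fun _ : ι => (1 : Matrix (Fin d) (Fin d) ℂ) from funext hGF]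
    exact ofT_one
  rw [Wk_map F G hFG hGF]
  let e : ((ι → Fin d) → ℂ) ≃ₗ[ℂ] ((ι → Fin d) → ℂ) :=
    { Matrix.mulVecLin (ofT F) with
      invFun := Matrix.mulVecLin (ofT G)
      left_inv := fun v => by
        simp only [LinearMap.toFun_eq_coe, Matrix.mulVecLin_apply, Matrix.mulVec_mulVec, hGF',
          Matrix.one_mulVec]
      right_inv := fun v => by
        simp only [LinearMap.toFun_eq_coe, Matrix.mulVecLin_apply, Matrix.mulVec_mulVec, hFG',
          Matrix.one_mulVec] }
  exact LinearEquiv.finrank_map_eq e (Wk φ k)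

end Aux4


open Matrix in
/-- If `ψ = Lφ` for an invertible local operator `L = ⊗ᵢ Lᵢ`
(i.e. `ψ` and `φ` are SLOCC-equivalent), then `dim W_k^ψ = dim W_k^φ` for all `k`,
hence the entanglement polynomials are equal. -/
theorem entPoly_eq_of_slocc {N d : ℕ}
    (Li : Fin N → Matrix (Fin d) (Fin d) ℂ) (hLi : ∀ i, IsUnit (Li i))
    (L : Matrix (Fin N → Fin d) (Fin N → Fin d) ℂ)
    (hL : L = Matrix.of fun x y => ∏ i, Li i (x i) (y i))
    (ψ φ : (Fin N → Fin d) → ℂ) (hψφ : ψ = L.mulVec φ) :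
    (∀ k : ℕ, dimW ψ k = dimW φ k) ∧ entPoly ψ = entPoly φ := by
  have hd : ∀ i, IsUnit (Li i).det := fun i => (Matrix.isUnit_iff_isUnit_det _).mp (hLi i)
  have hFG : ∀ i, Li i * (Li i)⁻¹ = 1 := fun i => Matrix.mul_nonsing_inv _ (hd i)
  have hGF : ∀ i, (Li i)⁻¹ * Li i = 1 := fun i => Matrix.nonsing_inv_mul _ (hd i)
  have hL' : L = ofT Li := hL
  have hk : ∀ k, dimW ψ k = dimW φ k := by
    intro k
    rw [hψφ, hL']
    exact dimWaux_eq Li (fun i => (Li i)⁻¹) hFG hGF φ k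
  refine ⟨hk, ?_⟩
  unfold entPoly
  refine Finset.sum_congr rfl fun k _ => ?_
  simp only [deltaDimW, hk]
end

section
/- Let ψ ∈ H_B and φ ∈ H_{B̄} be pure states of two disjoint sets of qudits. Then for every k, W_k^{ψ⊗φ} = Σ_{l+m=k} W_l^ψ ⊗ W_m^φ, where W_k of a state is the span of images of that state under k-local operators. -/
noncomputable section AuxWk

open Matrix

variable {ι₁ ι₂ : Type} [DecidableEq ι₁] [DecidableEq ι₂] {d : ℕ}

/-- Kronecker product of operators on the two factors. -/
def kron (M : Matrix (ι₁ → Fin d) (ι₁ → Fin d) ℂ) (N : Matrix (ι₂ → Fin d) (ι₂ → Fin d) ℂ) :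
    Matrix (ι₁ ⊕ ι₂ → Fin d) (ι₁ ⊕ ι₂ → Fin d) ℂ :=
  fun x y => M (fun i => x (Sum.inl i)) (fun i => y (Sum.inl i)) *
             N (fun j => x (Sum.inr j)) (fun j => y (Sum.inr j))

lemma Vk_mono (ι : Type*) [DecidableEq ι] (d : ℕ) {k k' : ℕ} (h : k ≤ k') :
    Vk ι d k ≤ Vk ι d k' :=
  Submodule.span_mono (fun M ⟨B, hB, hM⟩ => ⟨B, hB.trans h, hM⟩)

lemma Wk_mono {ι : Type*} [Fintype ι] [DecidableEq ι] {d : ℕ} (ψ : (ι → Fin d) → ℂ)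
    {k k' : ℕ} (h : k ≤ k') : Wk ψ k ≤ Wk ψ k' :=
  Submodule.span_mono (fun v ⟨M, hM, hv⟩ => ⟨M, Vk_mono ι d h hM, hv⟩)

lemma mulVec_mem_Wk {ι : Type*} [Fintype ι] [DecidableEq ι] {d : ℕ} {ψ : (ι → Fin d) → ℂ}
    {k : ℕ} {M : Matrix (ι → Fin d) (ι → Fin d) ℂ} (hM : M ∈ Vk ι d k) :
    M.mulVec ψ ∈ Wk ψ k :=
  Submodule.subset_span ⟨M, hM, rfl⟩

lemma kron_add_left (M M' : Matrix (ι₁ → Fin d) (ι₁ → Fin d) ℂ)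
    (N : Matrix (ι₂ → Fin d) (ι₂ → Fin d) ℂ) :
    kron (M + M') N = kron M N + kron M' N := by
  funext x y; simp [kron, Matrix.add_apply, add_mul]

lemma kron_smul_left (c : ℂ) (M : Matrix (ι₁ → Fin d) (ι₁ → Fin d) ℂ)
    (N : Matrix (ι₂ → Fin d) (ι₂ → Fin d) ℂ) :
    kron (c • M) N = c • kron M N := by
  funext x y; simp [kron, Matrix.smul_apply, mul_assoc]

lemma kron_zero_left (N : Matrix (ι₂ → Fin d) (ι₂ → Fin d) ℂ) :
    kron (0 : Matrix (ι₁ → Fin d) (ι₁ → Fin d) ℂ) N = 0 := by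
  funext x y; simp [kron]

lemma kron_add_right (M : Matrix (ι₁ → Fin d) (ι₁ → Fin d) ℂ)
    (N N' : Matrix (ι₂ → Fin d) (ι₂ → Fin d) ℂ) :
    kron M (N + N') = kron M N + kron M N' := by
  funext x y; simp [kron, Matrix.add_apply, mul_add]

lemma kron_smul_right (c : ℂ) (M : Matrix (ι₁ → Fin d) (ι₁ → Fin d) ℂ)
    (N : Matrix (ι₂ → Fin d) (ι₂ → Fin d) ℂ) :
    kron M (c • N) = c • kron M N := by
  funext x y; simp [kron, Matrix.smul_apply]; ring

lemma kron_zero_right (M : Matrix (ι₁ → Fin d) (ι₁ → Fin d) ℂ) :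
    kron M (0 : Matrix (ι₂ → Fin d) (ι₂ → Fin d) ℂ) = 0 := by
  funext x y; simp [kron]

lemma inl_mem_iff (B : Finset (ι₁ ⊕ ι₂)) (i : ι₁) :
    Sum.inl (β := ι₂) i ∈ B ↔ i ∈ B.preimage Sum.inl (Sum.inl_injective.injOn) :=
  (Finset.mem_preimage).symm

/-- supportedness of the Kronecker product. -/
lemma supportedOn_kron {B₁ : Finset ι₁} {B₂ : Finset ι₂}
    {M : Matrix (ι₁ → Fin d) (ι₁ → Fin d) ℂ} {N : Matrix (ι₂ → Fin d) (ι₂ → Fin d) ℂ}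
    (hM : SupportedOn d B₁ M) (hN : SupportedOn d B₂ N) :
    SupportedOn d (B₁.map ⟨Sum.inl, Sum.inl_injective⟩ ∪ B₂.map ⟨Sum.inr, Sum.inr_injective⟩)
      (kron M N) := by
  set U : Finset (ι₁ ⊕ ι₂) :=
    B₁.map ⟨Sum.inl, Sum.inl_injective⟩ ∪ B₂.map ⟨Sum.inr, Sum.inr_injective⟩ with hU
  have hmeml : ∀ i : ι₁, Sum.inl i ∈ U ↔ i ∈ B₁ := by
    intro i
    simp [hU, Finset.mem_union, Finset.mem_map, Function.Embedding.coeFn_mk]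
  have hmemr : ∀ j : ι₂, Sum.inr j ∈ U ↔ j ∈ B₂ := by
    intro j
    simp [hU, Finset.mem_union, Finset.mem_map, Function.Embedding.coeFn_mk]
  constructor
  · rintro x y ⟨s, hs, hxy⟩
    cases s with
    | inl i =>
        have hi : i ∉ B₁ := fun h => hs ((hmeml i).2 h)
        have : M (fun i => x (Sum.inl i)) (fun i => y (Sum.inl i)) = 0 :=
          hM.1 _ _ ⟨i, hi, hxy⟩
        simp [kron, this]
    | inr j =>
        have hj : j ∉ B₂ := fun h => hs ((hmemr j).2 h)
        have : N (fun j => x (Sum.inr j)) (fun j => y (Sum.inr j)) = 0 :=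
          hN.1 _ _ ⟨j, hj, hxy⟩
        simp [kron, this]
  · intro x y z z'
    show M _ _ * N _ _ = M _ _ * N _ _
    have el : ∀ w z : ι₁ ⊕ ι₂ → Fin d,
        (fun i => (fun s => if s ∈ U then w s else z s) (Sum.inl i)) =
        (fun i => if i ∈ B₁ then w (Sum.inl i) else z (Sum.inl i)) := by
      intro w z; funext i; simp only [hmeml i]
    have er : ∀ w z : ι₁ ⊕ ι₂ → Fin d,
        (fun j => (fun s => if s ∈ U then w s else z s) (Sum.inr j)) =
        (fun j => if j ∈ B₂ then w (Sum.inr j) else z (Sum.inr j)) := by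
      intro w z; funext j; simp only [hmemr j]
    rw [el x z, el y z, el x z', el y z', er x z, er y z, er x z', er y z',
      hM.2 (fun i => x (Sum.inl i)) (fun i => y (Sum.inl i)) (fun i => z (Sum.inl i))
        (fun i => z' (Sum.inl i)),
      hN.2 (fun j => x (Sum.inr j)) (fun j => y (Sum.inr j)) (fun j => z (Sum.inr j))
        (fun j => z' (Sum.inr j))]

lemma kron_mem_Vk {l m : ℕ} {M : Matrix (ι₁ → Fin d) (ι₁ → Fin d) ℂ}
    {N : Matrix (ι₂ → Fin d) (ι₂ → Fin d) ℂ}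
    (hM : M ∈ Vk ι₁ d l) (hN : N ∈ Vk ι₂ d m) :
    kron M N ∈ Vk (ι₁ ⊕ ι₂) d (l + m) := by
  induction hM using Submodule.span_induction with
  | mem M hMs =>
      induction hN using Submodule.span_induction with
      | mem N hNs =>
          obtain ⟨B₁, hB₁, hsM⟩ := hMs
          obtain ⟨B₂, hB₂, hsN⟩ := hNs
          refine Submodule.subset_span ⟨_, ?_, supportedOn_kron hsM hsN⟩
          calc (B₁.map ⟨Sum.inl, Sum.inl_injective⟩ ∪
                B₂.map ⟨Sum.inr, Sum.inr_injective⟩).card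
              ≤ (B₁.map ⟨Sum.inl, Sum.inl_injective⟩).card +
                (B₂.map ⟨Sum.inr, Sum.inr_injective⟩).card := Finset.card_union_le _ _
            _ = B₁.card + B₂.card := by rw [Finset.card_map, Finset.card_map]
            _ ≤ l + m := Nat.add_le_add hB₁ hB₂
      | zero => rw [kron_zero_right]; exact Submodule.zero_mem _
      | add N N' _ _ h h' => rw [kron_add_right]; exact Submodule.add_mem _ h h'
      | smul c N _ h => rw [kron_smul_right]; exact Submodule.smul_mem _ c h
  | zero => rw [kron_zero_left]; exact Submodule.zero_mem _
  | add M M' _ _ h h' => rw [kron_add_left]; exact Submodule.add_mem _ h h'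
  | smul c M _ h => rw [kron_smul_left]; exact Submodule.smul_mem _ c h

variable [Fintype ι₁] [Fintype ι₂]

lemma kron_mulVec (M : Matrix (ι₁ → Fin d) (ι₁ → Fin d) ℂ)
    (N : Matrix (ι₂ → Fin d) (ι₂ → Fin d) ℂ)
    (ψ : (ι₁ → Fin d) → ℂ) (φ : (ι₂ → Fin d) → ℂ) :
    (kron M N).mulVec (tens ψ φ) = tens (M.mulVec ψ) (N.mulVec φ) := by
  funext x
  simp only [mulVec, dotProduct, tens, kron]
  rw [Finset.sum_mul_sum, ← Equiv.sum_comp (Equiv.sumArrowEquivProdArrow ι₁ ι₂ (Fin d)).symm,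
    Fintype.sum_prod_type]
  refine Finset.sum_congr rfl fun a _ => Finset.sum_congr rfl fun b _ => ?_
  have h1 : (fun i => (Equiv.sumArrowEquivProdArrow ι₁ ι₂ (Fin d)).symm (a, b) (Sum.inl i)) = a :=
    rfl
  have h2 : (fun j => (Equiv.sumArrowEquivProdArrow ι₁ ι₂ (Fin d)).symm (a, b) (Sum.inr j)) = b :=
    rfl
  rw [h1, h2]; ring

lemma sum_mulVec {α : Type*} (s : Finset α) (A : α → Matrix (ι₁ ⊕ ι₂ → Fin d) (ι₁ ⊕ ι₂ → Fin d) ℂ)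
    (v : (ι₁ ⊕ ι₂ → Fin d) → ℂ) :
    (∑ p ∈ s, A p).mulVec v = ∑ p ∈ s, (A p).mulVec v := by
  funext x
  simp only [mulVec, dotProduct, Finset.sum_apply, Matrix.sum_apply, Finset.sum_mul]
  exact Finset.sum_comm

end AuxWk

section Decomp

open Classical in
/-- The local operator on `B₁` projecting onto configurations `p`, `q` on `B₁`
and acting as identity off `B₁`. -/
noncomputable def locM {ι₁ : Type} {d : ℕ} (B₁ : Finset ι₁) (p q : ι₁ → Fin d) :
    Matrix (ι₁ → Fin d) (ι₁ → Fin d) ℂ :=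
  fun x y => if (∀ i ∈ B₁, x i = p i ∧ y i = q i) ∧ (∀ i ∉ B₁, x i = y i) then 1 else 0

open Classical in
lemma locM_apply {ι₁ : Type} {d : ℕ} (B₁ : Finset ι₁) (p q x y : ι₁ → Fin d) :
    locM B₁ p q x y =
      if (∀ i ∈ B₁, x i = p i ∧ y i = q i) ∧ (∀ i ∉ B₁, x i = y i) then (1 : ℂ) else 0 := rfl

/-- The second tensor factor of the decomposition of a supported operator. -/
def locN {ι₁ ι₂ : Type} {d : ℕ} (K : Matrix (ι₁ ⊕ ι₂ → Fin d) (ι₁ ⊕ ι₂ → Fin d) ℂ)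
    (p q : ι₁ → Fin d) : Matrix (ι₂ → Fin d) (ι₂ → Fin d) ℂ :=
  fun u v => K (Sum.elim p u) (Sum.elim q v)

lemma locN_apply {ι₁ ι₂ : Type} {d : ℕ} (K : Matrix (ι₁ ⊕ ι₂ → Fin d) (ι₁ ⊕ ι₂ → Fin d) ℂ)
    (p q : ι₁ → Fin d) (u v : ι₂ → Fin d) :
    locN K p q u v = K (Sum.elim p u) (Sum.elim q v) := rfl

variable {ι₁ ι₂ : Type} [DecidableEq ι₁] [DecidableEq ι₂] {d : ℕ}

lemma supportedOn_locM (B₁ : Finset ι₁) (p q : ι₁ → Fin d) :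
    SupportedOn d B₁ (locM B₁ p q) := by
  classical
  constructor
  · rintro x y ⟨i, hi, hxy⟩
    rw [locM_apply]
    refine if_neg ?_
    rintro ⟨-, h2⟩
    exact hxy (h2 i hi)
  · intro x y z z'
    have h : ∀ z : ι₁ → Fin d,
        locM B₁ p q (fun i => if i ∈ B₁ then x i else z i)
          (fun i => if i ∈ B₁ then y i else z i) =
        if (∀ i ∈ B₁, x i = p i ∧ y i = q i) then (1 : ℂ) else 0 := by
      intro z
      rw [locM_apply]
      refine if_congr ?_ rfl rfl
      constructor
      · rintro ⟨h1, -⟩ i hi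
        simpa [hi] using h1 i hi
      · intro h1
        exact ⟨fun i hi => by simpa [hi] using h1 i hi, fun i hi => by simp [hi]⟩
    rw [h z, h z']

lemma supportedOn_locN {K : Matrix (ι₁ ⊕ ι₂ → Fin d) (ι₁ ⊕ ι₂ → Fin d) ℂ}
    {B : Finset (ι₁ ⊕ ι₂)} (hK : SupportedOn d B K) {p q : ι₁ → Fin d}
    (hpq : ∀ i : ι₁, Sum.inl i ∉ B → p i = q i) :
    SupportedOn d (B.preimage Sum.inr Sum.inr_injective.injOn) (locN K p q) := by
  set B₂ := B.preimage Sum.inr Sum.inr_injective.injOn with hB₂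
  have hmem₂ : ∀ j : ι₂, j ∈ B₂ ↔ Sum.inr j ∈ B := fun j => Finset.mem_preimage
  constructor
  · rintro u v ⟨j, hj, huv⟩
    rw [locN_apply]
    exact hK.1 _ _ ⟨Sum.inr j, fun hmem => hj ((hmem₂ j).2 hmem), huv⟩
  · intro u v z z'
    have key : ∀ (r : ι₁ → Fin d) (w z : ι₂ → Fin d),
        Sum.elim r (fun j => if j ∈ B₂ then w j else z j) =
        (fun s => if s ∈ B then Sum.elim r w s else Sum.elim r z s) := by
      intro r w z
      funext s
      cases s with
      | inl i => by_cases h : Sum.inl (β := ι₂) i ∈ B <;> simp [h]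
      | inr j =>
          by_cases h : j ∈ B₂
          · have h' : Sum.inr (α := ι₁) j ∈ B := (hmem₂ j).1 h
            simp [h, h']
          · have h' : Sum.inr (α := ι₁) j ∉ B := fun hc => h ((hmem₂ j).2 hc)
            simp [h, h']
    have key2 : ∀ (w z : ι₂ → Fin d),
        Sum.elim q (fun j => if j ∈ B₂ then w j else z j) =
        (fun s => if s ∈ B then Sum.elim q w s else Sum.elim p z s) := by
      intro w z
      funext s
      cases s with
      | inl i =>
          by_cases h : Sum.inl (β := ι₂) i ∈ B
          · simp [h]
          · simp [h, (hpq i h).symm]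
      | inr j =>
          by_cases h : j ∈ B₂
          · have h' : Sum.inr (α := ι₁) j ∈ B := (hmem₂ j).1 h
            simp [h, h']
          · have h' : Sum.inr (α := ι₁) j ∉ B := fun hc => h ((hmem₂ j).2 hc)
            simp [h, h']
    show K _ _ = K _ _
    rw [key p u z, key2 v z, key p u z', key2 v z']
    exact hK.2 (Sum.elim p u) (Sum.elim q v) (Sum.elim p z) (Sum.elim p z')

variable [Fintype ι₁] [Fintype ι₂]

open Classical in
lemma supported_decomp (K : Matrix (ι₁ ⊕ ι₂ → Fin d) (ι₁ ⊕ ι₂ → Fin d) ℂ)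
    {B : Finset (ι₁ ⊕ ι₂)} (hK : SupportedOn d B K) (p₀ : ι₁ → Fin d) :
    K = ∑ p ∈ Finset.univ.filter
          (fun p : ι₁ → Fin d => ∀ i ∉ B.preimage Sum.inl Sum.inl_injective.injOn, p i = p₀ i),
        ∑ q ∈ Finset.univ.filter
          (fun q : ι₁ → Fin d => ∀ i ∉ B.preimage Sum.inl Sum.inl_injective.injOn, q i = p₀ i),
          kron (locM (B.preimage Sum.inl Sum.inl_injective.injOn) p q) (locN K p q) := by
  classical
  set B₁ := B.preimage Sum.inl Sum.inl_injective.injOn with hB₁def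
  have hmem₁ : ∀ i : ι₁, i ∈ B₁ ↔ Sum.inl i ∈ B := fun i => Finset.mem_preimage
  set S := Finset.univ.filter (fun p : ι₁ → Fin d => ∀ i ∉ B₁, p i = p₀ i) with hSdef
  ext x y
  simp only [Matrix.sum_apply]
  set pstar : ι₁ → Fin d := fun i => if i ∈ B₁ then x (Sum.inl i) else p₀ i with hpstar
  set qstar : ι₁ → Fin d := fun i => if i ∈ B₁ then y (Sum.inl i) else p₀ i with hqstar
  have hpS : pstar ∈ S := Finset.mem_filter.2 ⟨Finset.mem_univ _, fun i hi => if_neg hi⟩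
  have hqS : qstar ∈ S := Finset.mem_filter.2 ⟨Finset.mem_univ _, fun i hi => if_neg hi⟩
  have hMzero : ∀ p q : ι₁ → Fin d, p ∈ S → q ∈ S → ¬(p = pstar ∧ q = qstar) →
      kron (locM B₁ p q) (locN K p q) x y = 0 := by
    intro p q hp hq hne
    have hz : locM B₁ p q (fun i => x (Sum.inl i)) (fun i => y (Sum.inl i)) = 0 := by
      rw [locM_apply]
      refine if_neg ?_
      rintro ⟨h1, -⟩
      refine hne ⟨funext fun i => ?_, funext fun i => ?_⟩
      · by_cases hi : i ∈ B₁
        · rw [← (h1 i hi).1, hpstar]; simp [hi]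
        · rw [(Finset.mem_filter.1 hp).2 i hi, hpstar]; simp [hi]
      · by_cases hi : i ∈ B₁
        · rw [← (h1 i hi).2, hqstar]; simp [hi]
        · rw [(Finset.mem_filter.1 hq).2 i hi, hqstar]; simp [hi]
    show locM B₁ p q _ _ * locN K p q _ _ = 0
    rw [hz, zero_mul]
  rw [Finset.sum_eq_single_of_mem pstar hpS (fun p hp hne =>
    Finset.sum_eq_zero fun q hq => hMzero p q hp hq (fun h => hne h.1)),
    Finset.sum_eq_single_of_mem qstar hqS (fun q hq hne =>
    hMzero pstar q hpS hq (fun h => hne h.2))]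
  show K x y = locM B₁ pstar qstar _ _ * locN K pstar qstar _ _
  by_cases hoff1 : ∀ i ∉ B₁, x (Sum.inl i) = y (Sum.inl i)
  · have hM1 : locM B₁ pstar qstar (fun i => x (Sum.inl i)) (fun i => y (Sum.inl i)) = 1 := by
      rw [locM_apply]
      refine if_pos ?_
      refine ⟨fun i hi => ⟨?_, ?_⟩, hoff1⟩
      · rw [hpstar]; simp [hi]
      · rw [hqstar]; simp [hi]
    rw [hM1, one_mul, locN_apply]
    by_cases hoff2 : ∀ j : ι₂, Sum.inr j ∉ B → x (Sum.inr j) = y (Sum.inr j)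
    · have e1 : (fun s => if s ∈ B then x s else x s) = x := by
        funext s; rw [ite_self]
      have e2 : (fun s => if s ∈ B then y s else x s) = y := by
        funext s
        by_cases h : s ∈ B
        · rw [if_pos h]
        · rw [if_neg h]
          cases s with
          | inl i => exact hoff1 i (fun hc => h ((hmem₁ i).1 hc))
          | inr j => exact hoff2 j h
      have e3 : (fun s => if s ∈ B then x s else Sum.elim p₀ (fun j => x (Sum.inr j)) s) =
          Sum.elim pstar (fun j => x (Sum.inr j)) := by
        funext s
        cases s with
        | inl i =>
            simp only [Sum.elim_inl]
            rw [hpstar]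
            by_cases h : i ∈ B₁
            · have h' : Sum.inl (β := ι₂) i ∈ B := (hmem₁ i).1 h
              simp [h, h']
            · have h' : Sum.inl (β := ι₂) i ∉ B := fun hc => h ((hmem₁ i).2 hc)
              simp [h, h']
        | inr j => simp only [Sum.elim_inr, ite_self]
      have e4 : (fun s => if s ∈ B then y s else Sum.elim p₀ (fun j => x (Sum.inr j)) s) =
          Sum.elim qstar (fun j => y (Sum.inr j)) := by
        funext s
        cases s with
        | inl i =>
            simp only [Sum.elim_inl]
            rw [hqstar]
            by_cases h : i ∈ B₁
            · have h' : Sum.inl (β := ι₂) i ∈ B := (hmem₁ i).1 h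
              simp [h, h']
            · have h' : Sum.inl (β := ι₂) i ∉ B := fun hc => h ((hmem₁ i).2 hc)
              simp [h, h']
        | inr j =>
            simp only [Sum.elim_inr]
            by_cases h : Sum.inr (α := ι₁) j ∈ B
            · rw [if_pos h]
            · rw [if_neg h]; exact hoff2 j h
      have hfin := hK.2 x y x (Sum.elim p₀ (fun j => x (Sum.inr j)))
      rw [e1, e2, e3, e4] at hfin
      exact hfin
    · push_neg at hoff2
      obtain ⟨j, hj, hne⟩ := hoff2
      rw [hK.1 x y ⟨Sum.inr j, hj, hne⟩, hK.1 _ _ ⟨Sum.inr j, hj, by simpa using hne⟩]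
  · push_neg at hoff1
    obtain ⟨i, hi, hne⟩ := hoff1
    have h0 : locM B₁ pstar qstar (fun i => x (Sum.inl i)) (fun i => y (Sum.inl i)) = 0 := by
      rw [locM_apply]
      refine if_neg ?_
      rintro ⟨-, h2⟩
      exact hne (h2 i hi)
    rw [h0, zero_mul, hK.1 x y ⟨Sum.inl i, fun hc => hi ((hmem₁ i).2 hc), hne⟩]

end Decomp

section Main

variable {ι₁ ι₂ : Type} [Fintype ι₁] [Fintype ι₂] [DecidableEq ι₁] [DecidableEq ι₂] {d : ℕ}

lemma tens_add_left (u u' : (ι₁ → Fin d) → ℂ) (v : (ι₂ → Fin d) → ℂ) :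
    tens (u + u') v = tens u v + tens u' v := by
  funext x; simp [tens, add_mul]

lemma tens_smul_left (c : ℂ) (u : (ι₁ → Fin d) → ℂ) (v : (ι₂ → Fin d) → ℂ) :
    tens (c • u) v = c • tens u v := by
  funext x; simp [tens, mul_assoc]

lemma tens_zero_left (v : (ι₂ → Fin d) → ℂ) :
    tens (0 : (ι₁ → Fin d) → ℂ) v = 0 := by
  funext x; simp [tens]

lemma tens_add_right (u : (ι₁ → Fin d) → ℂ) (v v' : (ι₂ → Fin d) → ℂ) :
    tens u (v + v') = tens u v + tens u v' := by
  funext x; simp [tens, mul_add]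

lemma tens_smul_right (c : ℂ) (u : (ι₁ → Fin d) → ℂ) (v : (ι₂ → Fin d) → ℂ) :
    tens u (c • v) = c • tens u v := by
  funext x; simp [tens]; ring

lemma tens_zero_right (u : (ι₁ → Fin d) → ℂ) :
    tens u (0 : (ι₂ → Fin d) → ℂ) = 0 := by
  funext x; simp [tens]

lemma supported_mulVec_mem (ψ : (ι₁ → Fin d) → ℂ) (φ : (ι₂ → Fin d) → ℂ) (k : ℕ)
    (K : Matrix (ι₁ ⊕ ι₂ → Fin d) (ι₁ ⊕ ι₂ → Fin d) ℂ)
    (B : Finset (ι₁ ⊕ ι₂)) (hB : B.card ≤ k) (hK : SupportedOn d B K) :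
    K.mulVec (tens ψ φ) ∈
      ⨆ l ∈ Finset.range (k + 1),
        Submodule.span ℂ
          {w : (ι₁ ⊕ ι₂ → Fin d) → ℂ |
            ∃ u ∈ Wk ψ l, ∃ v ∈ Wk φ (k - l), w = tens u v} := by
  classical
  by_cases hne : Nonempty (ι₁ → Fin d)
  case neg =>
    have hE : IsEmpty (ι₁ ⊕ ι₂ → Fin d) := ⟨fun x => hne ⟨fun i => x (Sum.inl i)⟩⟩
    have hz : K.mulVec (tens ψ φ) = 0 := funext fun x => (hE.false x).elim
    rw [hz]; exact Submodule.zero_mem _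
  obtain ⟨p₀⟩ := hne
  set B₁ := B.preimage Sum.inl Sum.inl_injective.injOn with hB₁def
  set B₂ := B.preimage Sum.inr Sum.inr_injective.injOn with hB₂def
  have hcard : B₁.card + B₂.card ≤ k := by
    have hsub : B₁.map ⟨Sum.inl, Sum.inl_injective⟩ ∪ B₂.map ⟨Sum.inr, Sum.inr_injective⟩ ⊆ B := by
      intro s hs
      rcases Finset.mem_union.1 hs with h | h
      · obtain ⟨i, hi, rfl⟩ := Finset.mem_map.1 h
        exact Finset.mem_preimage.1 hi
      · obtain ⟨j, hj, rfl⟩ := Finset.mem_map.1 h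
        exact Finset.mem_preimage.1 hj
    have hdisj : Disjoint (B₁.map ⟨Sum.inl, Sum.inl_injective⟩)
        (B₂.map ⟨Sum.inr, Sum.inr_injective⟩) := by
      rw [Finset.disjoint_left]
      rintro s h1 h2
      obtain ⟨i, -, rfl⟩ := Finset.mem_map.1 h1
      obtain ⟨j, -, h⟩ := Finset.mem_map.1 h2
      simp at h
    calc B₁.card + B₂.card
        = (B₁.map ⟨Sum.inl, Sum.inl_injective⟩ ∪ B₂.map ⟨Sum.inr, Sum.inr_injective⟩).card := by
          rw [Finset.card_union_of_disjoint hdisj, Finset.card_map, Finset.card_map]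
      _ ≤ B.card := Finset.card_le_card hsub
      _ ≤ k := hB
  have hl : B₁.card ≤ k := le_trans (Nat.le_add_right _ _) hcard
  rw [supported_decomp K hK p₀, sum_mulVec]
  refine Submodule.sum_mem _ fun p hp => ?_
  rw [sum_mulVec]
  refine Submodule.sum_mem _ fun q hq => ?_
  rw [kron_mulVec]
  refine Submodule.mem_iSup_of_mem B₁.card ?_
  refine Submodule.mem_iSup_of_mem (Finset.mem_range.2 (Nat.lt_succ_of_le hl)) ?_
  refine Submodule.subset_span ⟨_, ?_, _, ?_, rfl⟩
  · exact mulVec_mem_Wk (Submodule.subset_span ⟨B₁, le_rfl, supportedOn_locM B₁ p q⟩)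
  · have hpq : ∀ i : ι₁, Sum.inl i ∉ B → p i = q i := by
      intro i hi
      have hi' : i ∉ B₁ := fun hc => hi (Finset.mem_preimage.1 hc)
      rw [(Finset.mem_filter.1 hp).2 i hi', (Finset.mem_filter.1 hq).2 i hi']
    refine mulVec_mem_Wk (Submodule.subset_span ⟨B₂, ?_, supportedOn_locN hK hpq⟩)
    omega

end Main

open Matrix in
/-- For pure states `ψ ∈ H_B` and `φ ∈ H_{B̄}` of two disjoint sets of
qudits, `W_k^{ψ⊗φ} = Σ_{l+m=k} W_l^ψ ⊗ W_m^φ`. -/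
theorem Wk_tens_eq_sum_tens {ι₁ ι₂ : Type} [Fintype ι₁] [Fintype ι₂]
    [DecidableEq ι₁] [DecidableEq ι₂] {d : ℕ}
    (ψ : (ι₁ → Fin d) → ℂ) (φ : (ι₂ → Fin d) → ℂ) (k : ℕ) :
    Wk (tens ψ φ) k =
      ⨆ l ∈ Finset.range (k + 1),
        Submodule.span ℂ
          {w : (ι₁ ⊕ ι₂ → Fin d) → ℂ |
            ∃ u ∈ Wk ψ l, ∃ v ∈ Wk φ (k - l), w = tens u v} := by
  classical
  apply le_antisymm
  · refine Submodule.span_le.2 ?_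
    rintro v ⟨K, hK, rfl⟩
    induction hK using Submodule.span_induction with
    | mem K h =>
        obtain ⟨B, hB, hs⟩ := h
        exact supported_mulVec_mem ψ φ k K B hB hs
    | zero => rw [Matrix.zero_mulVec]; exact Submodule.zero_mem _
    | add K K' _ _ h h' => rw [Matrix.add_mulVec]; exact Submodule.add_mem _ h h'
    | smul c K _ h => rw [Matrix.smul_mulVec]; exact Submodule.smul_mem _ c h
  · refine iSup_le fun l => iSup_le fun hl => Submodule.span_le.2 ?_
    rintro w ⟨u, hu, v, hv, rfl⟩
    have hlk : l ≤ k := Nat.lt_succ_iff.1 (Finset.mem_range.1 hl)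
    induction hu using Submodule.span_induction with
    | mem u h =>
        obtain ⟨M, hM, rfl⟩ := h
        induction hv using Submodule.span_induction with
        | mem v h' =>
            obtain ⟨N, hN, rfl⟩ := h'
            rw [← kron_mulVec]
            exact mulVec_mem_Wk (Vk_mono _ d (by omega) (kron_mem_Vk hM hN))
        | zero => rw [tens_zero_right]; exact Submodule.zero_mem _
        | add v v' _ _ h h' => rw [tens_add_right]; exact Submodule.add_mem _ h h'
        | smul c v _ h => rw [tens_smul_right]; exact Submodule.smul_mem _ c h
    | zero => rw [tens_zero_left]; exact Submodule.zero_mem _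
    | add u u' _ _ h h' => rw [tens_add_left]; exact Submodule.add_mem _ h h'
    | smul c u _ h => rw [tens_smul_left]; exact Submodule.smul_mem _ c h
end

section
/- For pure states ψ and φ of disjoint sets of qudits, N_{ψ⊗φ} = N_ψ + N_φ, where N_χ is the minimal k such that W_{k+1}^χ = W_k^χ (i.e. the degree of the entanglement polynomial). -/
/-- `N_χ`: the minimal `k` such that `W_{k+1}^χ = W_k^χ` (the degree of the entanglement
polynomial). -/
noncomputable def Nstab {ι : Type*} [Fintype ι] [DecidableEq ι] {d : ℕ}
    (χ : (ι → Fin d) → ℂ) : ℕ :=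
  sInf {k : ℕ | Wk χ (k + 1) = Wk χ k}

/-!
`W_k^χ` is the image of `χ` under the span `V^k` of the `k`-local operators, and `V^k` is spanned by
the matrix units `|p_B⟩⟨q_B| ⊗ 1` with `|B| ≤ k`. A matrix unit on `B ⊆ ι₁ ⊕ ι₂` is the tensor
product of the matrix units on the two halves of `B`, whence
`W_k^{ψ⊗φ} = Σ_{l+m=k} W_l^ψ ⊗ W_m^φ`. Since `V^{k+1} = V^1 V^k`, the chain `W_k^χ` is constant
from the first `k` on where it does not grow.

Put `n = N_ψ + N_φ`. Every summand `W_l^ψ ⊗ W_m^φ` of `W_{n+1}^{ψ⊗φ}` has `l > N_ψ` or `m > N_φ`,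
so one factor can be lowered and the summand lies in `W_n^{ψ⊗φ}`. For `k < n` write
`k + 1 = l + m` with `l ≤ N_ψ`, `m ≤ N_φ`, and take `v ∈ W_l^ψ`, `w ∈ W_m^φ` outside the earlier
spaces: a product `f ⊗ g` of functionals separating them kills every summand of `W_k^{ψ⊗φ}`
but not `v ⊗ w ∈ W_{k+1}^{ψ⊗φ}`.
-/

open Matrix

section LocalUnits

variable {ι : Type*} [DecidableEq ι] {d : ℕ}

def patch (B : Finset ι) (x z : ι → Fin d) : ι → Fin d := fun i => if i ∈ B then x i else z i

lemma patch_self (B : Finset ι) (x : ι → Fin d) : patch B x x = x := by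
  funext i; simp [patch]

lemma SupportedOn.apply_patch {B : Finset ι} {M : Matrix (ι → Fin d) (ι → Fin d) ℂ}
    (hM : SupportedOn d B M) {x y : ι → Fin d} (hxy : ∀ i ∉ B, x i = y i) (z : ι → Fin d) :
    M (patch B x z) (patch B y z) = M x y := by
  have hy : patch B y x = y := by funext i; by_cases hi : i ∈ B <;> simp [patch, hi, hxy]
  calc M (patch B x z) (patch B y z) = M (patch B x x) (patch B y x) := hM.2 x y z x
    _ = M x y := by rw [patch_self, hy]

lemma patch_empty (x z : ι → Fin d) : patch ∅ x z = z := by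
  funext i; simp [patch]

lemma patch_univ [Fintype ι] (x z : ι → Fin d) : patch Finset.univ x z = x := by
  funext i; simp [patch]

lemma Vk_mono_s12 : Monotone (Vk ι d) := fun _ _ hkl =>
  Submodule.span_mono fun _ ⟨B, hB, hM⟩ => ⟨B, hB.trans hkl, hM⟩

variable [Fintype ι]

/-- The matrix unit `|p_B⟩⟨q_B| ⊗ 1` on the sites `B`: its `(x, y)` entry is `1` exactly when
`x = p` and `y = q` on `B` and `x = y` off `B`. -/
def localUnit (B : Finset ι) (p q : ι → Fin d) : Matrix (ι → Fin d) (ι → Fin d) ℂ :=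
  of fun x y => if x = patch B p y ∧ y = patch B q x then 1 else 0

lemma localUnit_apply (B : Finset ι) (p q x y : ι → Fin d) :
    localUnit B p q x y = if x = patch B p y ∧ y = patch B q x then 1 else 0 := rfl

lemma supportedOn_localUnit (B : Finset ι) (p q : ι → Fin d) :
    SupportedOn d B (localUnit B p q) := by
  refine ⟨fun x y ⟨i, hi, hne⟩ => if_neg fun h => hne ?_, fun x y z z' => ?_⟩
  · rw [h.1]; simp [patch, hi]
  · simp only [localUnit_apply]
    congr 1
    simp only [funext_iff, patch]
    apply propext
    grind

lemma localUnit_mul_localUnit (B C : Finset ι) (p q r s : ι → Fin d) :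
    localUnit B p q * localUnit C r s =
      if ∀ i ∈ B ∩ C, q i = r i then localUnit (B ∪ C) (patch B p r) (patch C s q) else 0 := by
  ext x y
  rw [mul_apply, Finset.sum_eq_single (patch B q x)]
  · split_ifs with h
    · simp only [localUnit_apply, ite_zero_mul_ite_zero, one_mul]
      congr 1
      simp only [funext_iff, patch]
      apply propext
      grind
    · simp only [localUnit_apply, ite_zero_mul_ite_zero, one_mul, Matrix.zero_apply]
      simp only [funext_iff, patch]
      grind
  · intro u _ hu
    simp only [localUnit_apply]
    grind
  · simp

lemma SupportedOn.mem_span_localUnit {B : Finset ι} {M : Matrix (ι → Fin d) (ι → Fin d) ℂ}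
    (hM : SupportedOn d B M) :
    M ∈ Submodule.span ℂ
      (Set.range fun pq : (ι → Fin d) × (ι → Fin d) => localUnit B pq.1 pq.2) := by
  rcases isEmpty_or_nonempty (ι → Fin d) with _ | ⟨⟨z⟩⟩
  · rw [Subsingleton.elim M 0]; exact zero_mem _
  -- `localUnit B p q` only sees `p` and `q` on `B`; pinning them to `z` off `B` picks one
  -- representative of each matrix unit
  let S := Finset.univ.filter fun pq : (ι → Fin d) × (ι → Fin d) =>
    pq = (patch B pq.1 z, patch B pq.2 z)
  suffices hsum : M = ∑ pq ∈ S, M pq.1 pq.2 • localUnit B pq.1 pq.2 by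
    rw [hsum]
    exact Submodule.sum_mem _ fun pq _ => Submodule.smul_mem _ _ (Submodule.subset_span ⟨pq, rfl⟩)
  ext x y
  rw [Matrix.sum_apply, Finset.sum_eq_single_of_mem (patch B x z, patch B y z)]
  · by_cases hxy : ∀ i ∉ B, x i = y i
    · rw [Matrix.smul_apply, hM.apply_patch hxy, localUnit_apply, if_pos, smul_eq_mul, mul_one]
      simp only [funext_iff, patch]
      grind
    · push Not at hxy
      rw [hM.1 x y hxy, Matrix.smul_apply, localUnit_apply, if_neg, smul_zero]
      simp only [funext_iff, patch]
      grind
  · simp only [S, Finset.mem_filter, Finset.mem_univ, true_and, funext_iff, patch, Prod.ext_iff]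
    grind
  · rintro ⟨p, q⟩ hpq hne
    simp only [S, Finset.mem_filter, Finset.mem_univ, true_and] at hpq
    rw [Matrix.smul_apply, localUnit_apply, if_neg, smul_zero]
    intro h
    apply hne
    simp only [funext_iff, patch, Prod.ext_iff] at h hpq ⊢
    grind

lemma localUnit_mem_Vk {B : Finset ι} {k : ℕ} (hB : B.card ≤ k) (p q : ι → Fin d) :
    localUnit B p q ∈ Vk ι d k :=
  Submodule.subset_span ⟨B, hB, supportedOn_localUnit B p q⟩

lemma Vk_eq_span_localUnit (k : ℕ) :
    Vk ι d k = Submodule.span ℂ {M | ∃ B : Finset ι, B.card ≤ k ∧ ∃ p q, localUnit B p q = M} := by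
  apply le_antisymm
  · refine Submodule.span_le.mpr fun M ⟨B, hB, hM⟩ => ?_
    refine Submodule.span_mono ?_ hM.mem_span_localUnit
    rintro _ ⟨⟨p, q⟩, rfl⟩
    exact ⟨B, hB, p, q, rfl⟩
  · exact Submodule.span_le.mpr fun _ ⟨B, hB, p, q, hM⟩ => hM ▸ localUnit_mem_Vk hB p q

lemma one_mem_Vk (k : ℕ) : (1 : Matrix (ι → Fin d) (ι → Fin d) ℂ) ∈ Vk ι d k := by
  refine Submodule.subset_span ⟨∅, Nat.zero_le k, ?_, fun x y z z' => ?_⟩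
  · rintro x y ⟨i, -, hne⟩
    exact one_apply_ne fun h => hne (congrFun h i)
  · change (1 : Matrix (ι → Fin d) (ι → Fin d) ℂ) (patch ∅ x z) (patch ∅ y z) =
      (1 : Matrix (ι → Fin d) (ι → Fin d) ℂ) (patch ∅ x z') (patch ∅ y z')
    rw [patch_empty, patch_empty, patch_empty, patch_empty, one_apply_eq, one_apply_eq]

lemma Vk_card_eq_top : Vk ι d (Fintype.card ι) = ⊤ := by
  refine eq_top_iff.mpr fun M _ =>
    Submodule.subset_span ⟨Finset.univ, le_rfl, ?_, fun x y z z' => ?_⟩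
  · rintro x y ⟨i, hi, -⟩
    exact absurd (Finset.mem_univ i) hi
  · change M (patch _ x z) (patch _ y z) = M (patch _ x z') (patch _ y z')
    simp only [patch_univ]

lemma Vk_mul_le (a b : ℕ) : Vk ι d a * Vk ι d b ≤ Vk ι d (a + b) := by
  rw [Vk_eq_span_localUnit a, Vk_eq_span_localUnit b, Submodule.span_mul_span,
    Submodule.span_le]
  rintro _ ⟨_, ⟨B, hB, p, q, rfl⟩, _, ⟨C, hC, r, s, rfl⟩, rfl⟩
  change localUnit B p q * localUnit C r s ∈ Vk ι d (a + b)
  rw [localUnit_mul_localUnit]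
  split_ifs
  · exact localUnit_mem_Vk ((Finset.card_union_le B C).trans (add_le_add hB hC)) _ _
  · exact zero_mem _

lemma localUnit_eq_mul_erase {B : Finset ι} {j : ι} (hj : j ∈ B) (p q : ι → Fin d) :
    localUnit B p q = localUnit {j} p q * localUnit (B.erase j) p q := by
  rw [localUnit_mul_localUnit, if_pos (by simp), patch_self, patch_self,
    Finset.singleton_union, Finset.insert_erase hj]

lemma Vk_succ_le_mul (k : ℕ) : Vk ι d (k + 1) ≤ Vk ι d 1 * Vk ι d k := by
  rw [Vk_eq_span_localUnit (k + 1), Submodule.span_le]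
  rintro _ ⟨B, hB, p, q, rfl⟩
  rcases B.eq_empty_or_nonempty with rfl | ⟨j, hj⟩
  · rw [← one_mul (localUnit ∅ p q)]
    exact Submodule.mul_mem_mul (one_mem_Vk 1) (localUnit_mem_Vk (Nat.zero_le k) p q)
  · rw [localUnit_eq_mul_erase hj]
    refine Submodule.mul_mem_mul (localUnit_mem_Vk (by simp) p q) (localUnit_mem_Vk ?_ p q)
    rw [Finset.card_erase_of_mem hj]
    omega

lemma Wk_eq_map (χ : (ι → Fin d) → ℂ) (k : ℕ) :
    Wk χ k = (Vk ι d k).map ((mulVecBilin ℂ ℂ).flip χ) := by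
  rw [Wk, ← Submodule.span_eq ((Vk ι d k).map _), Submodule.map_coe]
  congr 1
  ext v
  simp [eq_comm]

lemma Wk_eq_span_localUnit (χ : (ι → Fin d) → ℂ) (k : ℕ) :
    Wk χ k = Submodule.span ℂ
      {v | ∃ B : Finset ι, B.card ≤ k ∧ ∃ p q, localUnit B p q *ᵥ χ = v} := by
  rw [Wk_eq_map, Vk_eq_span_localUnit, Submodule.map_span]
  congr 1
  ext v
  simp

lemma mem_Wk {χ v : (ι → Fin d) → ℂ} {k : ℕ} : v ∈ Wk χ k ↔ ∃ M ∈ Vk ι d k, M *ᵥ χ = v := by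
  simp [Wk_eq_map]

lemma Wk_mono_s12 (χ : (ι → Fin d) → ℂ) : Monotone (Wk χ) := fun _ _ hkl => by
  simpa only [Wk_eq_map] using Submodule.map_mono (Vk_mono_s12 hkl)

lemma self_mem_Wk (χ : (ι → Fin d) → ℂ) (k : ℕ) : χ ∈ Wk χ k :=
  mem_Wk.mpr ⟨1, one_mem_Vk k, one_mulVec χ⟩

lemma mulVec_mem_Wk_s12 {χ v : (ι → Fin d) → ℂ} {M : Matrix (ι → Fin d) (ι → Fin d) ℂ} {a b : ℕ}
    (hM : M ∈ Vk ι d a) (hv : v ∈ Wk χ b) : M *ᵥ v ∈ Wk χ (a + b) := by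
  obtain ⟨N, hN, rfl⟩ := mem_Wk.mp hv
  rw [mulVec_mulVec]
  exact mem_Wk.mpr ⟨M * N, Vk_mul_le a b (Submodule.mul_mem_mul hM hN), rfl⟩

lemma Wk_succ_succ_eq {χ : (ι → Fin d) → ℂ} {k : ℕ} (h : Wk χ (k + 1) = Wk χ k) :
    Wk χ (k + 2) = Wk χ (k + 1) := by
  refine le_antisymm ?_ (Wk_mono_s12 χ (Nat.le_succ _))
  have hV : Vk ι d (k + 2) ≤ (Wk χ (k + 1)).comap ((mulVecBilin ℂ ℂ).flip χ) := by
    refine (Vk_succ_le_mul (k + 1)).trans (Submodule.mul_le.mpr fun A hA N hN => ?_)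
    have hNχ : N *ᵥ χ ∈ Wk χ k := h ▸ mem_Wk.mpr ⟨N, hN, rfl⟩
    have := mulVec_mem_Wk_s12 hA hNχ
    rwa [mulVec_mulVec, add_comm] at this
  rw [Wk_eq_map χ (k + 2)]
  exact Submodule.map_le_iff_le_comap.mpr hV

lemma Wk_succ_eq_of_Nstab_le {χ : (ι → Fin d) → ℂ} {k : ℕ} (hk : Nstab χ ≤ k) :
    Wk χ (k + 1) = Wk χ k := by
  induction k, hk using Nat.le_induction with
  | base =>
    have hcard : Wk χ (Fintype.card ι + 1) = Wk χ (Fintype.card ι) := by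
      refine le_antisymm ?_ (Wk_mono_s12 χ (Nat.le_succ _))
      rw [Wk_eq_map, Wk_eq_map, Vk_card_eq_top]
      exact Submodule.map_mono le_top
    exact Nat.sInf_mem (s := {k | Wk χ (k + 1) = Wk χ k}) ⟨_, hcard⟩
  | succ k _ ih => exact Wk_succ_succ_eq ih

lemma Wk_succ_ne_of_lt_Nstab {χ : (ι → Fin d) → ℂ} {k : ℕ} (hk : k < Nstab χ) :
    Wk χ (k + 1) ≠ Wk χ k :=
  Nat.notMem_of_lt_sInf hk

lemma Nstab_eq_of_Wk_succ_eq {χ : (ι → Fin d) → ℂ} {n : ℕ} (hn : Wk χ (n + 1) = Wk χ n)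
    (hlt : ∀ k < n, Wk χ (k + 1) ≠ Wk χ k) : Nstab χ = n :=
  le_antisymm (Nat.sInf_le hn) (not_lt.mp fun h => hlt _ h (Wk_succ_eq_of_Nstab_le le_rfl))

lemma not_Wk_le_iSup_lt {χ : (ι → Fin d) → ℂ} (hχ : χ ≠ 0) {l : ℕ} (hl : l ≤ Nstab χ) :
    ¬ Wk χ l ≤ ⨆ j < l, Wk χ j := by
  cases l with
  | zero =>
    simp only [not_lt_zero, iSup_false, iSup_bot, le_bot_iff]
    exact fun h => hχ ((Submodule.eq_bot_iff _).mp h χ (self_mem_Wk χ 0))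
  | succ l =>
    have hsup : ⨆ j < l + 1, Wk χ j = Wk χ l :=
      le_antisymm (iSup₂_le fun j hj => Wk_mono_s12 χ (Nat.le_of_lt_succ hj))
        (le_iSup₂_of_le l (Nat.lt_succ_self l) le_rfl)
    rw [hsup]
    exact fun h => Wk_succ_ne_of_lt_Nstab hl (le_antisymm h (Wk_mono_s12 χ (Nat.le_succ l)))

end LocalUnits

section TensorProduct

open Finset

variable {ι₁ ι₂ : Type*} {d : ℕ}

def tensBilin :
    ((ι₁ → Fin d) → ℂ) →ₗ[ℂ] ((ι₂ → Fin d) → ℂ) →ₗ[ℂ] ((ι₁ ⊕ ι₂ → Fin d) → ℂ) :=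
  LinearMap.mk₂ ℂ tens (fun _ _ _ => by ext; simp [tens, add_mul])
    (fun _ _ _ => by ext; simp [tens, mul_assoc]) (fun _ _ _ => by ext; simp [tens, mul_add])
    (fun _ _ _ => by ext; simp [tens, mul_left_comm])

lemma tensBilin_apply (a : (ι₁ → Fin d) → ℂ) (b : (ι₂ → Fin d) → ℂ) :
    tensBilin a b = tens a b := rfl

lemma tens_notMem_map₂_sup {U₁ : Submodule ℂ ((ι₁ → Fin d) → ℂ)}
    {U₂ : Submodule ℂ ((ι₂ → Fin d) → ℂ)} {v : (ι₁ → Fin d) → ℂ} {w : (ι₂ → Fin d) → ℂ}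
    (hv : v ∉ U₁) (hw : w ∉ U₂) :
    tens v w ∉ Submodule.map₂ tensBilin U₁ ⊤ ⊔ Submodule.map₂ tensBilin ⊤ U₂ := by
  obtain ⟨f, hfv, hf⟩ := U₁.exists_dual_map_eq_bot_of_notMem hv inferInstance
  obtain ⟨g, hgw, hg⟩ := U₂.exists_dual_map_eq_bot_of_notMem hw inferInstance
  simp only [← LinearMap.le_ker_iff_map, SetLike.le_def, LinearMap.mem_ker] at hf hg
  -- contract the second register with `g`, then the first with `f`
  let F := f ∘ₗ LinearMap.pi fun a => g ∘ₗ LinearMap.funLeft ℂ ℂ (Sum.elim a)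
  have hF (a : (ι₁ → Fin d) → ℂ) (b : (ι₂ → Fin d) → ℂ) : F (tens a b) = f a * g b := by
    have hcontr : (LinearMap.pi fun x => g ∘ₗ LinearMap.funLeft ℂ ℂ (Sum.elim x)) (tens a b) =
        g b • a := by
      ext x
      have : (fun y => tens a b (Sum.elim x y)) = a x • b := by ext y; simp [tens]
      change g (fun y => tens a b (Sum.elim x y)) = g b • a x
      rw [this, map_smul, smul_eq_mul, smul_eq_mul, mul_comm]
    simp only [F, LinearMap.comp_apply, hcontr, map_smul, smul_eq_mul, mul_comm]
  have hker : Submodule.map₂ tensBilin U₁ ⊤ ⊔ Submodule.map₂ tensBilin ⊤ U₂ ≤ LinearMap.ker F :=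
    sup_le (Submodule.map₂_le.mpr fun a ha b _ => by simp [tensBilin_apply, hF, hf ha])
      (Submodule.map₂_le.mpr fun a _ b hb => by simp [tensBilin_apply, hF, hg hb])
  exact fun hmem => mul_ne_zero hfv hgw ((hF v w).symm.trans (hker hmem))

def tensOp (M₁ : Matrix (ι₁ → Fin d) (ι₁ → Fin d) ℂ) (M₂ : Matrix (ι₂ → Fin d) (ι₂ → Fin d) ℂ) :
    Matrix (ι₁ ⊕ ι₂ → Fin d) (ι₁ ⊕ ι₂ → Fin d) ℂ :=
  of fun x y => M₁ (x ∘ Sum.inl) (y ∘ Sum.inl) * M₂ (x ∘ Sum.inr) (y ∘ Sum.inr)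

variable [Fintype ι₁] [Fintype ι₂] [DecidableEq ι₁] [DecidableEq ι₂]

lemma tensOp_mulVec_tens (M₁ : Matrix (ι₁ → Fin d) (ι₁ → Fin d) ℂ)
    (M₂ : Matrix (ι₂ → Fin d) (ι₂ → Fin d) ℂ) (ψ : (ι₁ → Fin d) → ℂ) (φ : (ι₂ → Fin d) → ℂ) :
    tensOp M₁ M₂ *ᵥ tens ψ φ = tens (M₁ *ᵥ ψ) (M₂ *ᵥ φ) := by
  ext x
  simp only [mulVec, dotProduct, tens, Fintype.sum_mul_sum]
  rw [← (Equiv.sumArrowEquivProdArrow ι₁ ι₂ (Fin d)).symm.sum_comp, Fintype.sum_prod_type]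
  simp only [tensOp, of_apply, Function.comp_def, Equiv.sumArrowEquivProdArrow_symm_apply_inl,
    Equiv.sumArrowEquivProdArrow_symm_apply_inr]
  exact Finset.sum_congr rfl fun _ _ => Finset.sum_congr rfl fun _ _ => by ring

lemma localUnit_eq_tensOp (B : Finset (ι₁ ⊕ ι₂)) (p q : ι₁ ⊕ ι₂ → Fin d) :
    localUnit B p q = tensOp (localUnit B.toLeft (p ∘ Sum.inl) (q ∘ Sum.inl))
      (localUnit B.toRight (p ∘ Sum.inr) (q ∘ Sum.inr)) := by
  ext x y
  simp only [tensOp, of_apply, localUnit_apply, ite_zero_mul_ite_zero, one_mul]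
  congr 1
  simp only [funext_iff, patch, Function.comp_apply, Finset.mem_toLeft, Finset.mem_toRight,
    Sum.forall]
  exact propext and_and_and_comm

lemma map₂_tens_Wk_le (ψ : (ι₁ → Fin d) → ℂ) (φ : (ι₂ → Fin d) → ℂ) (l m : ℕ) :
    Submodule.map₂ tensBilin (Wk ψ l) (Wk φ m) ≤ Wk (tens ψ φ) (l + m) := by
  rw [Wk_eq_span_localUnit ψ, Wk_eq_span_localUnit φ, Submodule.map₂_span_span, Submodule.span_le]
  rintro _ ⟨_, ⟨B₁, hB₁, p₁, q₁, rfl⟩, _, ⟨B₂, hB₂, p₂, q₂, rfl⟩, rfl⟩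
  have hunit := localUnit_eq_tensOp (B₁.disjSum B₂) (Sum.elim p₁ p₂) (Sum.elim q₁ q₂)
  simp only [Finset.toLeft_disjSum, Finset.toRight_disjSum, Sum.elim_comp_inl,
    Sum.elim_comp_inr] at hunit
  dsimp only [SetLike.mem_coe]
  rw [tensBilin_apply, ← tensOp_mulVec_tens, ← hunit]
  refine mem_Wk.mpr ⟨_, localUnit_mem_Vk ?_ _ _, rfl⟩
  rw [Finset.card_disjSum]
  exact add_le_add hB₁ hB₂

lemma Wk_tens_le_iSup (ψ : (ι₁ → Fin d) → ℂ) (φ : (ι₂ → Fin d) → ℂ) (k : ℕ) :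
    Wk (tens ψ φ) k ≤
      ⨆ lm ∈ antidiagonal k, Submodule.map₂ tensBilin (Wk ψ lm.1) (Wk φ lm.2) := by
  rw [Wk_eq_span_localUnit, Submodule.span_le]
  rintro _ ⟨B, hB, p, q, rfl⟩
  have hcard := B.card_toLeft_add_card_toRight
  rw [SetLike.mem_coe, localUnit_eq_tensOp, tensOp_mulVec_tens]
  refine Submodule.mem_iSup_of_mem (k - B.toRight.card, B.toRight.card) <|
    Submodule.mem_iSup_of_mem (mem_antidiagonal.mpr (by omega)) (Submodule.apply_mem_map₂ _ ?_ ?_)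
  · exact Wk_mono_s12 ψ (by omega) (mem_Wk.mpr ⟨_, localUnit_mem_Vk le_rfl _ _, rfl⟩)
  · exact mem_Wk.mpr ⟨_, localUnit_mem_Vk le_rfl _ _, rfl⟩

theorem Wk_tens (ψ : (ι₁ → Fin d) → ℂ) (φ : (ι₂ → Fin d) → ℂ) (k : ℕ) :
    Wk (tens ψ φ) k =
      ⨆ lm ∈ antidiagonal k, Submodule.map₂ tensBilin (Wk ψ lm.1) (Wk φ lm.2) :=
  le_antisymm (Wk_tens_le_iSup ψ φ k) <| iSup₂_le fun lm hlm =>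
    mem_antidiagonal.mp hlm ▸ map₂_tens_Wk_le ψ φ lm.1 lm.2

lemma Wk_tens_succ_eq (ψ : (ι₁ → Fin d) → ℂ) (φ : (ι₂ → Fin d) → ℂ) :
    Wk (tens ψ φ) (Nstab ψ + Nstab φ + 1) = Wk (tens ψ φ) (Nstab ψ + Nstab φ) := by
  refine le_antisymm ?_ (Wk_mono_s12 _ (Nat.le_succ _))
  rw [Wk_tens]
  refine iSup₂_le fun ⟨l, m⟩ hlm => ?_
  replace hlm := mem_antidiagonal.mp hlm
  -- one of the two factors has already stabilized, so its degree can be lowered by one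
  rcases Nat.lt_or_ge (Nstab ψ) l with hl | hm
  · obtain ⟨l, rfl⟩ : ∃ l', l = l' + 1 := ⟨l - 1, by omega⟩
    rw [Wk_succ_eq_of_Nstab_le (Nat.le_of_lt_succ hl)]
    exact (map₂_tens_Wk_le ψ φ l m).trans_eq (congrArg _ (by omega))
  · obtain ⟨m, rfl⟩ : ∃ m', m = m' + 1 := ⟨m - 1, by omega⟩
    rw [Wk_succ_eq_of_Nstab_le (show Nstab φ ≤ m by omega)]
    exact (map₂_tens_Wk_le ψ φ l m).trans_eq (congrArg _ (by omega))

lemma Wk_tens_succ_ne {ψ : (ι₁ → Fin d) → ℂ} {φ : (ι₂ → Fin d) → ℂ} (hψ : ψ ≠ 0) (hφ : φ ≠ 0)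
    {k : ℕ} (hk : k < Nstab ψ + Nstab φ) : Wk (tens ψ φ) (k + 1) ≠ Wk (tens ψ φ) k := by
  obtain ⟨l, m, hl, hm, hlm⟩ : ∃ l m, l ≤ Nstab ψ ∧ m ≤ Nstab φ ∧ l + m = k + 1 :=
    ⟨min (k + 1) (Nstab ψ), k + 1 - min (k + 1) (Nstab ψ), min_le_right _ _, by omega, by omega⟩
  obtain ⟨v, hv, hv'⟩ := SetLike.not_le_iff_exists.mp (not_Wk_le_iSup_lt hψ hl)
  obtain ⟨w, hw, hw'⟩ := SetLike.not_le_iff_exists.mp (not_Wk_le_iSup_lt hφ hm)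
  have hmem : tens v w ∈ Wk (tens ψ φ) (k + 1) :=
    hlm ▸ map₂_tens_Wk_le ψ φ l m (Submodule.apply_mem_map₂ _ hv hw)
  refine fun h => tens_notMem_map₂_sup hv' hw' ((Wk_tens_le_iSup ψ φ k).trans ?_ (h ▸ hmem))
  refine iSup₂_le fun ⟨l', m'⟩ hlm' => ?_
  replace hlm' := mem_antidiagonal.mp hlm'
  rcases Nat.lt_or_ge l' l with hl' | hm'
  · exact le_sup_of_le_left (Submodule.map₂_le_map₂ (le_iSup₂_of_le l' hl' le_rfl) le_top)
  · exact le_sup_of_le_right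
      (Submodule.map₂_le_map₂ le_top (le_iSup₂_of_le m' (by omega) le_rfl))

end TensorProduct

open Matrix in
/-- For pure states `ψ` and `φ` of disjoint sets of qudits,
`N_{ψ⊗φ} = N_ψ + N_φ`. -/
theorem Nstab_tens {ι₁ ι₂ : Type} [Fintype ι₁] [Fintype ι₂]
    [DecidableEq ι₁] [DecidableEq ι₂] {d : ℕ}
    (ψ : (ι₁ → Fin d) → ℂ) (φ : (ι₂ → Fin d) → ℂ) (hψ : ψ ≠ 0) (hφ : φ ≠ 0) :
    Nstab (tens ψ φ) = Nstab ψ + Nstab φ :=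
  Nstab_eq_of_Wk_succ_eq (Wk_tens_succ_eq ψ φ) fun _ hk => Wk_tens_succ_ne hψ hφ hk
end

section
/- For the three-qubit GHZ state (|000⟩+|111⟩)/√2, the entanglement polynomial is 1 + 7x: dim W_0 = 1, dim W_1 = 8 (the full Hilbert space), i.e. 1-local operators acting on the GHZ state span all of (ℂ²)^{⊗3}. -/
noncomputable section GHZaux

namespace GHZaux

open Matrix

/-- The 1-local operator `|s><t|` at site `i`. -/
def Mop (i : Fin 3) (s t : Fin 2) : Matrix (Fin 3 → Fin 2) (Fin 3 → Fin 2) ℂ :=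
  fun x y => if x i = s ∧ y i = t ∧ ∀ j, j ≠ i → x j = y j then 1 else 0

lemma Mop_supported (i : Fin 3) (s t : Fin 2) : SupportedOn 2 {i} (Mop i s t) := by
  constructor
  · rintro x y ⟨j, hj, hne⟩
    simp only [Finset.mem_singleton] at hj
    simp only [Mop, ite_eq_right_iff]
    rintro ⟨-, -, h⟩
    exact absurd (h j hj) hne
  · intro x y z z'
    simp only [Mop, Finset.mem_singleton]
    congr 1
    simp only [eq_iff_iff]
    constructor <;>
    · rintro ⟨h1, h2, h3⟩
      refine ⟨by simpa using h1, by simpa using h2, fun j hj => by simp [hj]⟩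

lemma Mop_mem_V1 (i : Fin 3) (s t : Fin 2) : Mop i s t ∈ Vk (Fin 3) 2 1 :=
  Submodule.subset_span ⟨{i}, by simp, Mop_supported i s t⟩

lemma Mop_mulVec (ψ : (Fin 3 → Fin 2) → ℂ) (i : Fin 3) (s t : Fin 2) :
    (Mop i s t).mulVec ψ =
      fun x => if x i = s then ψ (Function.update x i t) else 0 := by
  funext x
  simp only [Matrix.mulVec, dotProduct, Mop]
  rw [Finset.sum_eq_single (Function.update x i t)]
  · have hc : (x i = s ∧ Function.update x i t i = t ∧
        ∀ j, j ≠ i → x j = Function.update x i t j) ↔ x i = s := by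
      constructor
      · exact fun h => h.1
      · exact fun h => ⟨h, Function.update_self i t x,
          fun j hj => (Function.update_of_ne hj t x).symm⟩
    rw [if_congr hc rfl rfl]
    split <;> simp
  · intro y _ hy
    rw [if_neg, zero_mul]
    rintro ⟨-, h2, h3⟩
    apply hy
    funext j
    by_cases hj : j = i
    · subst hj; simp [Function.update, h2]
    · simp [Function.update, hj, (h3 j hj).symm]
  · simp

lemma key_single (ψ : (Fin 3 → Fin 2) → ℂ)
    (hψ : ψ = fun x => if (∀ i, x i = 0) ∨ (∀ i, x i = 1) then ((Real.sqrt 2 : ℂ))⁻¹ else 0)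
    (i : Fin 3) (s c : Fin 2) :
    Pi.single (Function.update (fun _ => c) i s) (1 : ℂ) ∈ Wk ψ 1 := by
  have hmem : (Mop i s c).mulVec ψ ∈ Wk ψ 1 :=
    Submodule.subset_span ⟨Mop i s c, Mop_mem_V1 i s c, rfl⟩
  have hsm : ((Real.sqrt 2 : ℂ)) • (Mop i s c).mulVec ψ ∈ Wk ψ 1 :=
    Submodule.smul_mem _ _ hmem
  have hs2 : (Real.sqrt 2 : ℂ) ≠ 0 := by
    simpa using Real.sqrt_ne_zero'.mpr (by norm_num)
  convert hsm using 1
  rw [Mop_mulVec, hψ]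
  funext x
  simp only [Pi.smul_apply, smul_eq_mul]
  by_cases hx : x = Function.update (fun _ => c) i s
  · subst hx
    have h1 : Function.update (fun _ => c) i s i = s := by simp
    have h2 : Function.update (Function.update (fun _ => c) i s) i c = fun _ => c := by
      funext j
      by_cases hj : j = i <;> simp [Function.update, hj]
    rw [Pi.single_eq_same, h1, h2, if_pos rfl, if_pos (by fin_cases c <;> simp)]
    exact (mul_inv_cancel₀ hs2).symm
  · rw [Pi.single_eq_of_ne hx]
    by_cases hxi : x i = s
    · rw [if_pos hxi]
      rw [if_neg, mul_zero]
      have hupd : ∀ j, Function.update x i c j = if j = i then c else x j := by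
        intro j; simp [Function.update]
      rintro (h | h)
      all_goals {
        apply hx
        funext j
        have hji := h i
        rw [hupd i, if_pos rfl] at hji
        by_cases hj : j = i
        · subst hj; simp [Function.update, hxi]
        · have := h j
          rw [hupd j, if_neg hj] at this
          simp [Function.update, hj, this, ← hji]
      }
    · rw [if_neg hxi, mul_zero]

lemma Wk_one_top (ψ : (Fin 3 → Fin 2) → ℂ)
    (hψ : ψ = fun x => if (∀ i, x i = 0) ∨ (∀ i, x i = 1) then ((Real.sqrt 2 : ℂ))⁻¹ else 0) :
    Wk ψ 1 = ⊤ := by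
  rw [eq_top_iff, ← (Pi.basisFun ℂ (Fin 3 → Fin 2)).span_eq, Submodule.span_le]
  rintro v ⟨x, rfl⟩
  rw [Pi.basisFun_apply]
  obtain ⟨c, i, s, rfl⟩ : ∃ c i s, x = Function.update (fun _ => c) i s := by
    revert x; decide
  exact key_single ψ hψ i s c

lemma Wk_mono (ψ : (Fin 3 → Fin 2) → ℂ) {k k' : ℕ} (h : k ≤ k') : Wk ψ k ≤ Wk ψ k' := by
  apply Submodule.span_mono
  rintro v ⟨M, hM, rfl⟩
  refine ⟨M, ?_, rfl⟩
  exact Submodule.span_mono (fun N => by rintro ⟨B, hB, hN⟩; exact ⟨B, hB.trans h, hN⟩) hM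

/-- mulVec by ψ as a linear map in the matrix. -/
def mulVecPsi (ψ : (Fin 3 → Fin 2) → ℂ) :
    Matrix (Fin 3 → Fin 2) (Fin 3 → Fin 2) ℂ →ₗ[ℂ] ((Fin 3 → Fin 2) → ℂ) where
  toFun M := M.mulVec ψ
  map_add' M N := Matrix.add_mulVec M N ψ
  map_smul' c M := Matrix.smul_mulVec c M ψ

lemma Wk_zero_eq (ψ : (Fin 3 → Fin 2) → ℂ) : Wk ψ 0 = Submodule.span ℂ {ψ} := by
  apply le_antisymm
  · rw [Wk, Submodule.span_le]
    rintro v ⟨M, hM, rfl⟩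
    have hmap : (mulVecPsi ψ) M ∈ Submodule.map (mulVecPsi ψ) (Vk (Fin 3) 2 0) :=
      Submodule.mem_map_of_mem hM
    rw [Vk, Submodule.map_span] at hmap
    have hle : Submodule.span ℂ ((mulVecPsi ψ) ''
        {M | ∃ B : Finset (Fin 3), B.card ≤ 0 ∧ SupportedOn 2 B M}) ≤
        Submodule.span ℂ {ψ} := by
      rw [Submodule.span_le]
      rintro w ⟨N, ⟨B, hB, hN⟩, rfl⟩
      have hB0 : B = ∅ := Finset.card_eq_zero.mp (Nat.le_zero.mp hB)
      subst hB0
      set z : Fin 3 → Fin 2 := fun _ => 0 with hz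
      have hdiag : ∀ x, N x x = N z z := by
        intro x
        have := hN.2 x x x z
        simpa using this
      have hN' : N = N z z • (1 : Matrix (Fin 3 → Fin 2) (Fin 3 → Fin 2) ℂ) := by
        funext x y
        by_cases hxy : x = y
        · subst hxy
          simp [Matrix.one_apply, hdiag x]
        · obtain ⟨i, hi⟩ := Function.ne_iff.mp hxy
          rw [hN.1 x y ⟨i, Finset.notMem_empty i, hi⟩]
          simp [Matrix.one_apply, hxy]
      have : (mulVecPsi ψ) N = N z z • ψ := by
        show N.mulVec ψ = _
        conv_lhs => rw [hN']
        rw [Matrix.smul_mulVec, Matrix.one_mulVec]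
      rw [this]
      exact Submodule.smul_mem _ _ (Submodule.mem_span_singleton_self ψ)
    exact hle hmap
  · rw [Submodule.span_singleton_le_iff_mem]
    have hsupp : SupportedOn 2 (∅ : Finset (Fin 3))
        (1 : Matrix (Fin 3 → Fin 2) (Fin 3 → Fin 2) ℂ) := by
      constructor
      · rintro x y ⟨i, -, hi⟩
        exact Matrix.one_apply_ne (fun h => hi (congrFun h i))
      · intro x y z z'
        simp [Matrix.one_apply]
    exact Submodule.subset_span
      ⟨1, Submodule.subset_span ⟨∅, by simp, hsupp⟩, (Matrix.one_mulVec ψ).symm⟩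

end GHZaux

end GHZaux

open Polynomial in
/-- For the three-qubit GHZ state `(|000⟩+|111⟩)/√2`, the entanglement
polynomial is `1 + 7x`: `dim W_0 = 1` and `dim W_1 = 8`, i.e. 1-local operators acting on
the GHZ state span all of `(ℂ²)^{⊗3}`. -/
theorem entPoly_GHZ (ψ : (Fin 3 → Fin 2) → ℂ)
    (hψ : ψ = fun x => if (∀ i, x i = 0) ∨ (∀ i, x i = 1) then ((Real.sqrt 2 : ℂ))⁻¹ else 0) :
    entPoly ψ = C 1 + C 7 * X ∧ dimW ψ 0 = 1 ∧ dimW ψ 1 = 8 ∧ Wk ψ 1 = ⊤ := by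
  have hne : ψ ≠ 0 := by
    intro h
    have h0 : ψ (fun _ => 0) = 0 := by rw [h]; rfl
    rw [hψ] at h0
    simp only [if_pos (Or.inl (fun i => rfl))] at h0
    have hs2 : (Real.sqrt 2 : ℂ) ≠ 0 := by
      simpa using Real.sqrt_ne_zero'.mpr (by norm_num)
    exact hs2 (by simpa using inv_eq_zero.mp h0)
  have htop : Wk ψ 1 = ⊤ := GHZaux.Wk_one_top ψ hψ
  have hfr : Module.finrank ℂ ((Fin 3 → Fin 2) → ℂ) = 8 := by
    rw [Module.finrank_fintype_fun_eq_card]; simp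
  have hd0 : dimW ψ 0 = 1 := by
    rw [dimW, GHZaux.Wk_zero_eq ψ, finrank_span_singleton hne]
  have hdk : ∀ k, 1 ≤ k → dimW ψ k = 8 := by
    intro k hk
    have : Wk ψ k = ⊤ :=
      eq_top_iff.mpr (htop ▸ GHZaux.Wk_mono ψ hk)
    rw [dimW, this, finrank_top, hfr]
  have hd1 : dimW ψ 1 = 8 := hdk 1 le_rfl
  have hd2 : dimW ψ 2 = 8 := hdk 2 (by norm_num)
  have hd3 : dimW ψ 3 = 8 := hdk 3 (by norm_num)
  refine ⟨?_, hd0, hd1, htop⟩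
  have hcard : Fintype.card (Fin 3) = 3 := by simp
  rw [entPoly, hcard]
  rw [Finset.sum_range_succ, Finset.sum_range_succ, Finset.sum_range_succ,
    Finset.sum_range_one]
  simp only [deltaDimW, hd0, hd1, hd2, hd3]
  norm_num
end
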